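/- arXiv:2002.10121 — 5 statements merged into one kernel-verified Lean document; each statement's English description precedes it below -/
import Mathlib

section
/- Let X₁, X₂, … be i.i.d. Bernoulli(μ) random variables and let Mₙ = (X₁+⋯+Xₙ)/n. Suppose θ > 2/3 and m ≥ 4 is an integer with 1/m ≤ 1-θ < 1/(m-1). If μ ≥ (1+θ)/2, then the probability that Mₙ > θ for all n ≥ 1 is at least exp(-1/2)/3. -/
open MeasureTheory ProbabilityTheory Finset

/-!
Encode the sample path as the random walk with step `+1` when `Xᵢ = 1` and `1 - m` otherwise.
Started at `0`, its height after `n` steps is `m Sₙ - (m - 1) n`, so it stays positive forever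
exactly when `Mₙ > 1 - 1/m ≥ θ` for every `n`.

If `s > 1` and `μ + (1 - μ) sᵐ ≤ s`, then `s^(-height)` is a supermartingale, and the
gambler's-ruin induction on the horizon shows that the walk started at height `w > 0` stays
positive with probability at least `1 - A s^(-w)`, where `A = (1 - μ) sᵐ / (s - μ)`. Forcing the
first `m` steps up costs `μᵐ` and lifts the walk to height `m`, where the bound is
`(s - 1) / (s - μ)`. For `s = 1 + 2/(3m)` and `m ≥ 4` we have `sᵐ ≤ e^(2/3) ≤ 2` and
`1 - μ ≤ s - 1`, so the probability is at least `5/12 · 1/2 ≥ e^(-1/2)/3`.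
-/

namespace BernoulliWalk

variable {Ω : Type*}

noncomputable def walkStep (m : ℕ) (x : ℝ) : ℝ := if x = 1 then 1 else 1 - m

lemma measurable_walkStep (m : ℕ) : Measurable (walkStep m) :=
  Measurable.ite measurableSet_eq measurable_const measurable_const

lemma walkStep_eq {m : ℕ} {x : ℝ} (hx : x = 0 ∨ x = 1) : walkStep m x = m * x - (m - 1) := by
  rcases hx with rfl | rfl <;> simp [walkStep]

def survivalEvent (X : ℕ → Ω → ℝ) (m k N : ℕ) (w : ℝ) : Set Ω :=
  {ω | ∀ n < N, 0 < w + ∑ i ∈ range (n + 1), walkStep m (X (k + i) ω)}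

variable {X : ℕ → Ω → ℝ} {m k N : ℕ} {w : ℝ}

lemma survivalEvent_zero : survivalEvent X m k 0 w = Set.univ := by
  simp [survivalEvent]

lemma survivalEvent_anti : Antitone fun N => survivalEvent X m k N w :=
  fun _ _ hN _ hω n hn => hω n (hn.trans_le hN)

lemma mem_survivalEvent_succ {ω : Ω} :
    ω ∈ survivalEvent X m k (N + 1) w ↔
      0 < w + walkStep m (X k ω) ∧
        ω ∈ survivalEvent X m (k + 1) N (w + walkStep m (X k ω)) := by
  simp only [survivalEvent, Set.mem_ofPred_eq, Nat.forall_lt_succ_left, zero_add, range_one,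
    sum_singleton, add_zero]
  refine and_congr_right fun _ => forall₂_congr fun n _ => ?_
  rw [sum_range_succ', add_zero, add_comm (∑ i ∈ range (n + 1), _), ← add_assoc]
  simp only [add_assoc, add_comm 1]

lemma measurableSet_survivalEvent {mΩ : MeasurableSpace Ω} (hX : ∀ i, Measurable (X (k + i))) :
    MeasurableSet (survivalEvent X m k N w) := by
  simp only [survivalEvent, Set.ofPred_forall]
  exact .iInter fun n => .iInter fun _ => measurableSet_lt measurable_const <|
    measurable_const.add <| Finset.measurable_sum _ fun i _ => (measurable_walkStep m).comp (hX i)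

lemma lt_avg_of_forall_mem_survivalEvent {θ : ℝ} (hm : 0 < m) (hθ : 1 / (m : ℝ) ≤ 1 - θ)
    {ω : Ω} (hval : ∀ i, X i ω = 0 ∨ X i ω = 1)
    (hω : ∀ N, ω ∈ survivalEvent X m 0 N 0)
    {n : ℕ} (hn : 1 ≤ n) : θ < (∑ i ∈ range n, X i ω) / n := by
  obtain ⟨n, rfl⟩ : ∃ n', n = n' + 1 := ⟨n - 1, by omega⟩
  have hwalk := hω (n + 1) n n.lt_succ_self
  simp only [zero_add, walkStep_eq (hval _), sum_sub_distrib, ← mul_sum, sum_const,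
    card_range, nsmul_eq_mul] at hwalk
  have hm' : (0 : ℝ) < m := by exact_mod_cast hm
  have hθ' : θ * m ≤ m - 1 := by
    rw [div_le_iff₀ hm'] at hθ
    linarith
  rw [lt_div_iff₀ (by positivity)]
  nlinarith

variable [MeasurableSpace Ω] {P : Measure Ω}

lemma measure_preimage_inter_survivalEvent (hmeas : ∀ i, Measurable (X i))
    (hindep : iIndepFun X P) {s : Set ℝ} (hs : MeasurableSet s) :
    P (X k ⁻¹' s ∩ survivalEvent X m (k + 1) N w)
      = P (X k ⁻¹' s) * P (survivalEvent X m (k + 1) N w) := by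
  have hdisj : Disjoint ({k} : Set ℕ) (Set.Ioi k) := by simp
  refine (Indep_iff _ _ _).1
    (indep_iSup_of_disjoint (fun i => (hmeas i).comap_le) hindep.iIndep hdisj) _ _ ?_ ?_
  · exact le_iSup₂ (f := fun i (_ : i ∈ ({k} : Set ℕ)) => MeasurableSpace.comap (X i) _)
      k rfl _ ⟨s, hs, rfl⟩
  · refine measurableSet_survivalEvent fun i => (comap_measurable (X (k + 1 + i))).mono ?_ le_rfl
    exact le_iSup₂ (f := fun i (_ : i ∈ Set.Ioi k) => MeasurableSpace.comap (X i) _) (k + 1 + i)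
      (by simp only [Set.mem_Ioi]; omega)

variable {μ : ℝ} {Y : Ω → ℝ}

lemma measure_preimage_one (hY : Measurable Y)
    (h : P.map Y
      = ENNReal.ofReal μ • Measure.dirac 1 + ENNReal.ofReal (1 - μ) • Measure.dirac 0) :
    P (Y ⁻¹' {1}) = ENNReal.ofReal μ := by
  rw [← Measure.map_apply hY (measurableSet_singleton 1), h]
  simp

lemma measure_preimage_compl_one (hY : Measurable Y)
    (h : P.map Y
      = ENNReal.ofReal μ • Measure.dirac 1 + ENNReal.ofReal (1 - μ) • Measure.dirac 0) :
    P (Y ⁻¹' {1}ᶜ) = ENNReal.ofReal (1 - μ) := by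
  rw [← Measure.map_apply hY (measurableSet_singleton 1).compl, h]
  simp

lemma ae_eq_zero_or_eq_one (hY : Measurable Y)
    (h : P.map Y
      = ENNReal.ofReal μ • Measure.dirac 1 + ENNReal.ofReal (1 - μ) • Measure.dirac 0) :
    ∀ᵐ ω ∂P, Y ω = 0 ∨ Y ω = 1 := by
  have hs : MeasurableSet ({0, 1} : Set ℝ)ᶜ := (Set.toFinite _).measurableSet.compl
  rw [ae_iff]
  change P (Y ⁻¹' {0, 1}ᶜ) = 0
  rw [← Measure.map_apply hY hs, h]
  simp

lemma measure_mul_measure_survivalEvent_le (hmeas : ∀ i, Measurable (X i))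
    (hindep : iIndepFun X P) {s : Set ℝ} (hs : MeasurableSet s) {d : ℝ}
    (hd : ∀ x ∈ s, walkStep m x = d) (hwd : 0 < w + d) :
    P (X k ⁻¹' s) * P (survivalEvent X m (k + 1) N (w + d))
      ≤ P (survivalEvent X m k (N + 1) w ∩ X k ⁻¹' s) := by
  rw [← measure_preimage_inter_survivalEvent hmeas hindep hs]
  refine measure_mono fun ω ⟨hωs, hω⟩ => ⟨?_, hωs⟩
  rw [mem_survivalEvent_succ, hd _ hωs]
  exact ⟨hwd, hω⟩

lemma ofReal_mul_measure_survivalEvent_le_of_step_up (hmeas : ∀ i, Measurable (X i))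
    (hindep : iIndepFun X P)
    (hbern : ∀ i, P.map (X i)
      = ENNReal.ofReal μ • Measure.dirac 1 + ENNReal.ofReal (1 - μ) • Measure.dirac 0)
    (hw : 0 < w + 1) :
    ENNReal.ofReal μ * P (survivalEvent X m (k + 1) N (w + 1))
      ≤ P (survivalEvent X m k (N + 1) w ∩ X k ⁻¹' {1}) := by
  rw [← measure_preimage_one (hmeas k) (hbern k)]
  exact measure_mul_measure_survivalEvent_le hmeas hindep (measurableSet_singleton 1)
    (fun _ hx => if_pos hx) hw

lemma ofReal_pow_mul_measure_survivalEvent_le (hmeas : ∀ i, Measurable (X i))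
    (hindep : iIndepFun X P)
    (hbern : ∀ i, P.map (X i)
      = ENNReal.ofReal μ • Measure.dirac 1 + ENNReal.ofReal (1 - μ) • Measure.dirac 0)
    (j : ℕ) (hw : 0 ≤ w) :
    ENNReal.ofReal μ ^ j * P (survivalEvent X m (k + j) N (w + j))
      ≤ P (survivalEvent X m k (j + N) w) := by
  induction j generalizing k w with
  | zero => simp
  | succ j ih =>
    calc ENNReal.ofReal μ ^ (j + 1) * P (survivalEvent X m (k + (j + 1)) N (w + ↑(j + 1)))
        = ENNReal.ofReal μ * (ENNReal.ofReal μ ^ j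
            * P (survivalEvent X m (k + 1 + j) N (w + 1 + j))) := by
          rw [pow_succ', mul_assoc, show k + (j + 1) = k + 1 + j by ring,
            show w + ↑(j + 1) = w + 1 + j by push_cast; ring]
      _ ≤ ENNReal.ofReal μ * P (survivalEvent X m (k + 1) (j + N) (w + 1)) := by
          gcongr
          exact ih (by linarith)
      _ ≤ P (survivalEvent X m k (j + 1 + N) w) := by
          rw [Nat.add_right_comm]
          exact (ofReal_mul_measure_survivalEvent_le_of_step_up hmeas hindep hbern
            (by linarith)).trans (measure_mono Set.inter_subset_left)

theorem ofReal_one_sub_le_measure_survivalEvent [IsProbabilityMeasure P]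
    (hmeas : ∀ i, Measurable (X i)) (hindep : iIndepFun X P)
    (hbern : ∀ i, P.map (X i)
      = ENNReal.ofReal μ • Measure.dirac 1 + ENNReal.ofReal (1 - μ) • Measure.dirac 0)
    (hμ0 : 0 ≤ μ) (hμ1 : μ ≤ 1) {s A : ℝ} (hs : 1 < s) (hA : 0 ≤ A)
    (hsuper : μ + (1 - μ) * s ^ m ≤ s) (hAs : (1 - μ) * s ^ m ≤ A * (s - μ))
    (N : ℕ) (hw : 0 < w) :
    ENNReal.ofReal (1 - A * s ^ (-w)) ≤ P (survivalEvent X m k N w) := by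
  induction N generalizing k w with
  | zero =>
    rw [survivalEvent_zero, measure_univ]
    exact ENNReal.ofReal_le_one.2 (sub_le_self _ (mul_nonneg hA (Real.rpow_nonneg (by linarith) _)))
  | succ N ih =>
    have hup : ENNReal.ofReal (μ * (1 - A * s ^ (-(w + 1))))
        ≤ P (survivalEvent X m k (N + 1) w ∩ X k ⁻¹' {1}) := by
      rw [ENNReal.ofReal_mul hμ0]
      exact (mul_le_mul_right (ih (by linarith)) _).trans
        (ofReal_mul_measure_survivalEvent_le_of_step_up hmeas hindep hbern (by linarith))
    have hu : 0 < s ^ (-(w + 1)) := Real.rpow_pos_of_pos (by linarith) _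
    have hsw : s ^ (-w) = s * s ^ (-(w + 1)) := by
      rw [mul_comm, ← Real.rpow_add_one (by linarith)]
      ring_nf
    by_cases hwm : 0 < w + (1 - m)
    · have hdown : ENNReal.ofReal ((1 - μ) * (1 - A * s ^ (-(w + (1 - m)))))
          ≤ P (survivalEvent X m k (N + 1) w \ X k ⁻¹' {1}) := by
        rw [ENNReal.ofReal_mul (by linarith), Set.sdiff_eq, ← Set.preimage_compl,
          ← measure_preimage_compl_one (hmeas k) (hbern k)]
        exact (mul_le_mul_right (ih hwm) _).trans
          (measure_mul_measure_survivalEvent_le hmeas hindep (measurableSet_singleton 1).compl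
            (fun _ hx => if_neg hx) hwm)
      have hsm : s ^ (-(w + (1 - m))) = s ^ m * s ^ (-(w + 1)) := by
        rw [← Real.rpow_natCast, ← Real.rpow_add (by linarith)]
        ring_nf
      calc ENNReal.ofReal (1 - A * s ^ (-w))
          ≤ ENNReal.ofReal (μ * (1 - A * s ^ (-(w + 1)))
              + (1 - μ) * (1 - A * s ^ (-(w + (1 - m))))) := by
            refine ENNReal.ofReal_le_ofReal ?_
            rw [hsw, hsm]
            nlinarith [mul_nonneg (mul_nonneg hA hu.le) (sub_nonneg.2 hsuper)]
        _ ≤ _ := ENNReal.ofReal_add_le.trans (add_le_add hup hdown)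
        _ = P (survivalEvent X m k (N + 1) w) :=
            measure_inter_add_sdiff _ (hmeas k (measurableSet_singleton 1))
    · -- the down-step may be fatal, but `s ^ (-(w + 1)) ≥ s ^ (-m)` makes the up-step enough
      have hsm : 1 ≤ s ^ m * s ^ (-(w + 1)) := by
        rw [← Real.rpow_natCast, ← Real.rpow_add (by linarith)]
        exact Real.one_le_rpow hs.le (by linarith)
      calc ENNReal.ofReal (1 - A * s ^ (-w))
          ≤ ENNReal.ofReal (μ * (1 - A * s ^ (-(w + 1)))) := by
            refine ENNReal.ofReal_le_ofReal ?_
            rw [hsw]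
            nlinarith [mul_le_mul_of_nonneg_right hAs hu.le]
        _ ≤ P (survivalEvent X m k (N + 1) w) := hup.trans (measure_mono Set.inter_subset_left)

theorem ofReal_le_measure_forall_lt_avg [IsProbabilityMeasure P]
    (hmeas : ∀ i, Measurable (X i)) (hindep : iIndepFun X P)
    (hbern : ∀ i, P.map (X i)
      = ENNReal.ofReal μ • Measure.dirac 1 + ENNReal.ofReal (1 - μ) • Measure.dirac 0)
    (hμ0 : 0 ≤ μ) (hμ1 : μ ≤ 1) {θ : ℝ} (hm : 0 < m) (hθ : 1 / (m : ℝ) ≤ 1 - θ)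
    {s : ℝ} (hs : 1 < s) (hsuper : μ + (1 - μ) * s ^ m ≤ s) :
    ENNReal.ofReal (μ ^ m * ((s - 1) / (s - μ)))
      ≤ P {ω | ∀ n : ℕ, 1 ≤ n → θ < (∑ i ∈ range n, X i ω) / n} := by
  have hsμ : 0 < s - μ := by linarith
  have hAs : (1 - μ) * s ^ m / (s - μ) * s ^ (-(m : ℝ)) = 1 - (s - 1) / (s - μ) := by
    rw [Real.rpow_neg (by linarith), Real.rpow_natCast]
    field_simp
    ring
  have hbound : ∀ N, ENNReal.ofReal (μ ^ m * ((s - 1) / (s - μ)))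
      ≤ P (survivalEvent X m 0 N 0) := fun N => calc
    _ = ENNReal.ofReal μ ^ m
          * ENNReal.ofReal (1 - (1 - μ) * s ^ m / (s - μ) * s ^ (-(m : ℝ))) := by
        rw [hAs, sub_sub_cancel, ENNReal.ofReal_mul (by positivity), ENNReal.ofReal_pow hμ0]
    _ ≤ ENNReal.ofReal μ ^ m * P (survivalEvent X m m N m) := by
        gcongr
        exact ofReal_one_sub_le_measure_survivalEvent hmeas hindep hbern hμ0 hμ1 hs
          (by positivity) hsuper (div_mul_cancel₀ _ hsμ.ne').ge N (by exact_mod_cast hm)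
    _ ≤ P (survivalEvent X m 0 (m + N) 0) := by
        simpa using ofReal_pow_mul_measure_survivalEvent_le (k := 0) (w := 0) (N := N)
          hmeas hindep hbern m le_rfl
    _ ≤ P (survivalEvent X m 0 N 0) := measure_mono (survivalEvent_anti (by omega))
  have hlim : P (⋂ N, survivalEvent X m 0 N 0) = ⨅ N, P (survivalEvent X m 0 N 0) :=
    survivalEvent_anti.measure_iInter
      (fun N => (measurableSet_survivalEvent fun i => hmeas _).nullMeasurableSet)
      ⟨0, measure_ne_top _ _⟩
  calc _ ≤ P (⋂ N, survivalEvent X m 0 N 0) := hlim ▸ le_iInf hbound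
    _ ≤ _ := by
      refine measure_mono_ae ?_
      filter_upwards [ae_all_iff.2 fun i => ae_eq_zero_or_eq_one (hmeas i) (hbern i)]
        with ω hval hω
      exact fun n hn => lt_avg_of_forall_mem_survivalEvent hm hθ hval (Set.mem_iInter.1 hω) hn

lemma one_add_two_div_pow_le_two (m : ℕ) : (1 + 2 / (3 * m : ℝ)) ^ m ≤ 2 := by
  calc (1 + 2 / (3 * m : ℝ)) ^ m ≤ Real.exp (2 / (3 * m)) ^ m := by
        gcongr
        linarith [Real.add_one_le_exp (2 / (3 * m : ℝ))]
    _ = Real.exp (m * (2 / (3 * m))) := (Real.exp_nat_mul _ _).symm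
    _ ≤ Real.exp (Real.log 2) := by
        gcongr
        rcases Nat.eq_zero_or_pos m with rfl | hm
        · simp [Real.log_nonneg]
        · rw [show (m : ℝ) * (2 / (3 * m)) = 2 / 3 by field_simp]
          linarith [Real.log_two_gt_d9]
    _ = 2 := Real.exp_log two_pos

lemma exp_neg_half_div_three_le : Real.exp (-(1 / 2)) / 3 ≤ 5 / 12 * (1 / 2) := by
  have h := Real.quadratic_le_exp_of_nonneg (x := 1 / 2) (by norm_num)
  rw [Real.exp_neg, div_le_iff₀ (by norm_num), inv_le_comm₀ (Real.exp_pos _) (by norm_num)]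
  linarith

lemma five_div_twelve_le_pow {μ : ℝ} {m : ℕ} (hm : 1 ≤ m) (hμ : 5 / 6 ≤ μ)
    (hq : 2 * ((m : ℝ) - 1) * (1 - μ) < 1) : 5 / 12 ≤ μ ^ m := by
  obtain ⟨k, rfl⟩ : ∃ k, m = k + 1 := ⟨m - 1, by omega⟩
  have hbernoulli := one_add_mul_le_pow (a := μ - 1) (by linarith) k
  rw [add_sub_cancel] at hbernoulli
  push_cast at hq
  have hk : 1 / 2 ≤ μ ^ k := by nlinarith
  rw [pow_succ]
  nlinarith [mul_le_mul hk hμ (by norm_num) (by positivity)]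

end BernoulliWalk

open BernoulliWalk

theorem stmt_3_general {Ω : Type*} [MeasurableSpace Ω] (P : Measure Ω) [IsProbabilityMeasure P]
    (X : ℕ → Ω → ℝ) (μ θ : ℝ) (m : ℕ)
    (hmeas : ∀ i, Measurable (X i))
    (hindep : iIndepFun X P)
    (hbern : ∀ i, Measure.map (X i) P
      = ENNReal.ofReal μ • Measure.dirac (1 : ℝ) + ENNReal.ofReal (1 - μ) • Measure.dirac (0 : ℝ))
    (hμ1 : μ ≤ 1)
    (hm4 : 4 ≤ m)
    (hm1 : 1 / (m : ℝ) ≤ 1 - θ) (hm2 : 1 - θ < 1 / ((m : ℝ) - 1))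
    (hμ : (1 + θ) / 2 ≤ μ) :
    ENNReal.ofReal (Real.exp (-(1 / 2)) / 3)
      ≤ P {ω | ∀ n : ℕ, 1 ≤ n → θ < (∑ i ∈ range n, X i ω) / n} := by
  have hm : (4 : ℝ) ≤ m := by exact_mod_cast hm4
  have hq : 2 * ((m : ℝ) - 1) * (1 - μ) < 1 := by
    rw [lt_div_iff₀ (by linarith)] at hm2
    nlinarith
  have hμ56 : 5 / 6 < μ := by nlinarith
  set s : ℝ := 1 + 2 / (3 * m) with hs
  have hqs : 1 - μ ≤ s - 1 := by
    rw [hs, add_sub_cancel_left, le_div_iff₀ (by positivity)]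
    nlinarith
  have hs1 : 1 < s := lt_add_of_pos_right 1 (by positivity)
  have hsuper : μ + (1 - μ) * s ^ m ≤ s := by
    nlinarith [one_add_two_div_pow_le_two m, one_le_pow₀ (n := m) (by linarith : 1 ≤ s)]
  have hratio : 1 / 2 ≤ (s - 1) / (s - μ) := by
    rw [le_div_iff₀ (by linarith)]
    linarith
  refine le_trans (ENNReal.ofReal_le_ofReal ?_) (ofReal_le_measure_forall_lt_avg hmeas hindep hbern
    (by linarith) hμ1 (by omega) hm1 hs1 hsuper)
  calc Real.exp (-(1 / 2)) / 3 ≤ 5 / 12 * (1 / 2) := exp_neg_half_div_three_le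
    _ ≤ μ ^ m * ((s - 1) / (s - μ)) :=
      mul_le_mul (five_div_twelve_le_pow (by omega) hμ56.le hq) hratio (by norm_num)
        (pow_nonneg (by linarith) m)

theorem stmt_3 {Ω : Type*} [MeasurableSpace Ω] (P : Measure Ω) [IsProbabilityMeasure P]
    (X : ℕ → Ω → ℝ) (μ θ : ℝ) (m : ℕ)
    (hmeas : ∀ i, Measurable (X i))
    (hindep : iIndepFun X P)
    (hbern : ∀ i, Measure.map (X i) P
      = ENNReal.ofReal μ • Measure.dirac (1 : ℝ) + ENNReal.ofReal (1 - μ) • Measure.dirac (0 : ℝ))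
    (hμ1 : μ ≤ 1)
    (hθ : 2 / 3 < θ) (hm4 : 4 ≤ m)
    (hm1 : 1 / (m : ℝ) ≤ 1 - θ) (hm2 : 1 - θ < 1 / ((m : ℝ) - 1))
    (hμ : (1 + θ) / 2 ≤ μ) :
    ENNReal.ofReal (Real.exp (-(1 / 2)) / 3)
      ≤ P {ω | ∀ n : ℕ, 1 ≤ n → θ < (∑ i ∈ range n, X i ω) / n} :=
  stmt_3_general P X μ θ m hmeas hindep hbern hμ1 hm4 hm1 hm2 hμ
end

section
/- Let Z be the random variable θ - B where B ∼ Bernoulli(μ), θ = 1 - 1/m with integer m ≥ 2 and θ < μ < 1. Let γ > 0 be the nonzero solution of E[exp(γ Z)] = 1. Then (m/(m-1))·log(μ/((1-μ)(m-1))) ≤ γ ≤ (2m/(m-1))·log(μ/((1-μ)(m-1))). -/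
/-! With `x = exp (γ / m)` the Lundberg equation reads `μ + (1 - μ) x ^ m = x`; dividing by `x - 1`
gives `(1 - μ) (x + x² + ⋯ + x ^ (m - 1)) = μ`. Hence `μ / ((1 - μ) (m - 1))` is the mean of
`x, …, x ^ (m - 1)`: at most the largest term `x ^ (m - 1)`, and by AM–GM (convexity of `exp`) at
least `x ^ (m / 2)`. Taking logarithms gives the two bounds. -/

open Real Finset

lemma sum_range_exp_succ_mul_le (n : ℕ) {t : ℝ} (ht : 0 ≤ t) :
    ∑ i ∈ range n, exp ((i + 1) * t) ≤ n * exp (n * t) := by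
  have hterm : ∀ i ∈ range n, exp ((i + 1) * t) ≤ exp (n * t) := fun i hi => by
    have : (i : ℝ) + 1 ≤ n := by exact_mod_cast mem_range.1 hi
    gcongr
  simpa using sum_le_card_nsmul _ _ _ hterm

lemma sum_range_cast_add_one (n : ℕ) : ∑ i ∈ range n, ((i : ℝ) + 1) = n * (n + 1) / 2 := by
  induction n with
  | zero => simp
  | succ n ih => rw [sum_range_succ, ih]; push_cast; ring

lemma mul_exp_le_sum_range_exp_succ_mul {n : ℕ} (hn : 0 < n) (t : ℝ) :
    n * exp ((n + 1) * t / 2) ≤ ∑ i ∈ range n, exp ((i + 1) * t) := by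
  have hn' : (0 : ℝ) < n := by exact_mod_cast hn
  have jensen := convexOn_exp.map_sum_le (t := range n) (w := fun _ => (n : ℝ)⁻¹)
    (p := fun i : ℕ => (i + 1) * t) (fun _ _ => by positivity)
    (by simp [hn'.ne']) (fun _ _ => Set.mem_univ _)
  simp only [smul_eq_mul, ← mul_sum, ← sum_mul, sum_range_cast_add_one] at jensen
  rw [← le_inv_mul_iff₀ hn']
  convert jensen using 2
  field_simp

lemma one_sub_mul_sum_range_pow_succ_eq {K : Type*} [Field K] {μ x : K} {n : ℕ} (hx : x ≠ 1)
    (h : μ + (1 - μ) * x ^ (n + 1) = x) : (1 - μ) * ∑ i ∈ range n, x ^ (i + 1) = μ := by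
  have hgeom := geom_sum_mul x n
  have : ((1 - μ) * ∑ i ∈ range n, x ^ (i + 1) - μ) * (x - 1) = 0 := by
    simp only [pow_succ, ← sum_mul]
    linear_combination (1 - μ) * x * hgeom + h
  simpa [sub_eq_zero, hx] using this

lemma one_sub_mul_sum_range_exp_eq_of_lundberg {μ t : ℝ} {n : ℕ} (ht : t ≠ 0)
    (h : μ * exp (-t) + (1 - μ) * exp (n * t) = 1) :
    (1 - μ) * ∑ i ∈ range n, exp ((i + 1) * t) = μ := by
  have hexp : ∀ k : ℕ, exp (k * t) = exp t ^ k := fun k => exp_nat_mul t k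
  have hx : exp t ≠ 1 := by simpa using ht
  have hpoly : μ + (1 - μ) * exp t ^ (n + 1) = exp t := by
    rw [exp_neg, hexp] at h
    field_simp at h
    linear_combination h
  convert one_sub_mul_sum_range_pow_succ_eq hx hpoly using 3 with i
  exact_mod_cast hexp (i + 1)

lemma lundberg_log_bounds {μ t : ℝ} {n : ℕ} (hn : 0 < n) (ht : 0 < t) (hμ1 : μ < 1)
    (h : μ * exp (-t) + (1 - μ) * exp (n * t) = 1) :
    (n + 1) * t / 2 ≤ log (μ / ((1 - μ) * n)) ∧ log (μ / ((1 - μ) * n)) ≤ n * t := by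
  have hn' : (0 : ℝ) < n := by exact_mod_cast hn
  have hratio : μ / ((1 - μ) * n) = (∑ i ∈ range n, exp ((i + 1) * t)) / n := by
    rw [div_eq_div_iff (mul_ne_zero (sub_pos.2 hμ1).ne' hn'.ne') hn'.ne']
    linear_combination (-(n : ℝ)) * one_sub_mul_sum_range_exp_eq_of_lundberg ht.ne' h
  have hlow : exp ((n + 1) * t / 2) ≤ μ / ((1 - μ) * n) := by
    rw [hratio, le_div_iff₀ hn', mul_comm]
    exact mul_exp_le_sum_range_exp_succ_mul hn t
  have hup : μ / ((1 - μ) * n) ≤ exp (n * t) := by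
    rw [hratio, div_le_iff₀ hn', mul_comm]
    exact sum_range_exp_succ_mul_le n ht.le
  have hpos := (exp_pos _).trans_le hlow
  exact ⟨(le_log_iff_exp_le hpos).2 hlow, (log_le_iff_le_exp hpos).2 hup⟩

theorem stmt_4_general (μ θ γ : ℝ) (m : ℕ) (hm : 2 ≤ m)
    (hθ : θ = 1 - 1 / (m : ℝ)) (hμ1 : μ < 1)
    (hγ : 0 < γ)
    (hlund : μ * Real.exp (γ * (θ - 1)) + (1 - μ) * Real.exp (γ * θ) = 1) :
    ((m : ℝ) / ((m : ℝ) - 1)) * Real.log (μ / ((1 - μ) * ((m : ℝ) - 1))) ≤ γ ∧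
    γ ≤ (2 * (m : ℝ) / ((m : ℝ) - 1)) * Real.log (μ / ((1 - μ) * ((m : ℝ) - 1))) := by
  obtain ⟨n, rfl⟩ : ∃ n, m = n + 1 := ⟨m - 1, by omega⟩
  have hn : (0 : ℝ) < n := by exact_mod_cast (by omega : 0 < n)
  have hγt : γ = (n + 1) * (γ / (n + 1)) := by field_simp
  push_cast at hθ ⊢
  rw [add_sub_cancel_right]
  have hlund' : μ * exp (-(γ / (n + 1))) + (1 - μ) * exp (n * (γ / (n + 1))) = 1 := by
    convert hlund using 4 <;> rw [hθ] <;> field_simp <;> ring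
  obtain ⟨hlow, hup⟩ := lundberg_log_bounds (by omega) (by positivity) hμ1 hlund'
  constructor
  · rw [div_mul_eq_mul_div, div_le_iff₀ hn]
    nlinarith
  · rw [div_mul_eq_mul_div, le_div_iff₀ hn]
    nlinarith

theorem stmt_4 (μ θ γ : ℝ) (m : ℕ) (hm : 2 ≤ m)
    (hθ : θ = 1 - 1 / (m : ℝ)) (hθμ : θ < μ) (hμ1 : μ < 1)
    (hγ : 0 < γ)
    (hlund : μ * Real.exp (γ * (θ - 1)) + (1 - μ) * Real.exp (γ * θ) = 1) :
    ((m : ℝ) / ((m : ℝ) - 1)) * Real.log (μ / ((1 - μ) * ((m : ℝ) - 1))) ≤ γ ∧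
    γ ≤ (2 * (m : ℝ) / ((m : ℝ) - 1)) * Real.log (μ / ((1 - μ) * ((m : ℝ) - 1))) :=
  stmt_4_general μ θ γ m hm hθ hμ1 hγ hlund
end

section
/- Let x > 1 be real and m ≥ 2 an integer, and suppose x + x² + ⋯ + x^{m-1} = c where c > m-1. Then ((c/(m-1)))^{1/(m-1)} ≤ x ≤ (c/(m-1))^{2/(m-1)}. -/
/-! Write `n = m - 1`. Every term `x ^ i` is at most `x ^ n`, so `c ≤ n x ^ n`, which is the lower
bound. For the upper bound write `x = y ^ 2`: pairing `x ^ i` with `x ^ (n + 1 - i)` and using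
`2ab ≤ a² + b²` gives `c ≥ n y ^ (n + 1) ≥ n y ^ n`, so `√x ≤ (c / n) ^ (1 / n)`. -/

open Finset

section GeometricSumBounds

variable {R : Type*}

lemma sum_Icc_pow_le_mul_pow [CommSemiring R] [PartialOrder R] [IsOrderedRing R]
    {x : R} (hx : 1 ≤ x) (n : ℕ) :
    ∑ i ∈ Icc 1 n, x ^ i ≤ n * x ^ n :=
  calc ∑ i ∈ Icc 1 n, x ^ i ≤ ∑ _i ∈ Icc 1 n, x ^ n :=
        sum_le_sum fun i hi => pow_le_pow_right₀ hx (mem_Icc.mp hi).2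
    _ = n * x ^ n := by simp

lemma sum_Icc_one_reflect [AddCommMonoid R] (f : ℕ → R) (n : ℕ) :
    ∑ i ∈ Icc 1 n, f (n + 1 - i) = ∑ i ∈ Icc 1 n, f i := by
  simpa [Ico_add_one_right_eq_Icc] using sum_Ico_reflect f 1 (n + 1).le_succ

lemma mul_pow_succ_le_sum_Icc_sq_pow [CommRing R] [LinearOrder R] [IsStrictOrderedRing R]
    (y : R) (n : ℕ) :
    n * y ^ (n + 1) ≤ ∑ i ∈ Icc 1 n, (y ^ 2) ^ i := by
  have hpair : ∀ i ∈ Icc 1 n, 2 * y ^ (n + 1) ≤ (y ^ 2) ^ i + (y ^ 2) ^ (n + 1 - i) := by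
    intro i hi
    have hsplit : y ^ (n + 1) = y ^ i * y ^ (n + 1 - i) := by
      rw [← pow_add]; congr 1; have := (mem_Icc.mp hi).2; omega
    rw [hsplit, pow_right_comm y 2 i, pow_right_comm y 2 (n + 1 - i)]
    nlinarith [sq_nonneg (y ^ i - y ^ (n + 1 - i))]
  have hsum := sum_le_sum hpair
  rw [sum_add_distrib, sum_Icc_one_reflect (fun i => (y ^ 2) ^ i)] at hsum
  simp only [sum_const, Nat.card_Icc, add_tsub_cancel_right, nsmul_eq_mul] at hsum
  linarith

end GeometricSumBounds

theorem stmt_5_general (x c : ℝ) (m : ℕ) (hm : 2 ≤ m) (hx : 1 < x)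
    (hsum : ∑ i ∈ Finset.Icc 1 (m - 1), x ^ i = c) :
    (c / ((m : ℝ) - 1)) ^ ((1 : ℝ) / ((m : ℝ) - 1)) ≤ x ∧
    x ≤ (c / ((m : ℝ) - 1)) ^ ((2 : ℝ) / ((m : ℝ) - 1)) := by
  obtain ⟨n, rfl⟩ : ∃ n, m = n + 1 := ⟨m - 1, by omega⟩
  have hn : (0 : ℝ) < n := by exact_mod_cast (by omega : 0 < n)
  simp only [Nat.cast_add, Nat.cast_one, add_sub_cancel_right] at hsum ⊢
  have hc : 0 ≤ c / n := by rw [← hsum]; positivity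
  constructor
  · rw [one_div, Real.rpow_inv_le_iff_of_pos hc (by positivity) hn, Real.rpow_natCast,
      div_le_iff₀' hn, ← hsum]
    exact sum_Icc_pow_le_mul_pow hx.le n
  · set y := √x
    have hy : 1 ≤ y := Real.one_le_sqrt.mpr hx.le
    have hxy : x = y ^ 2 := (Real.sq_sqrt (by linarith)).symm
    have hyn : y ^ n ≤ c / n := by
      rw [le_div_iff₀' hn, ← hsum, hxy]
      calc n * y ^ n ≤ n * y ^ (n + 1) :=
            mul_le_mul_of_nonneg_left (pow_le_pow_right₀ hy n.le_succ) hn.le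
        _ ≤ _ := mul_pow_succ_le_sum_Icc_sq_pow y n
    have hyroot : y ≤ (c / n) ^ (n⁻¹ : ℝ) := by
      rwa [Real.le_rpow_inv_iff_of_pos (by positivity) hc hn, Real.rpow_natCast]
    calc x = y ^ 2 := hxy
      _ ≤ ((c / n) ^ (n⁻¹ : ℝ)) ^ 2 := by gcongr
      _ = (c / n) ^ (2 / n : ℝ) := by
        rw [← Real.rpow_natCast, ← Real.rpow_mul hc]; ring_nf

theorem stmt_5 (x c : ℝ) (m : ℕ) (hm : 2 ≤ m) (hx : 1 < x)
    (hc : ((m : ℝ) - 1) < c)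
    (hsum : ∑ i ∈ Finset.Icc 1 (m - 1), x ^ i = c) :
    (c / ((m : ℝ) - 1)) ^ ((1 : ℝ) / ((m : ℝ) - 1)) ≤ x ∧
    x ≤ (c / ((m : ℝ) - 1)) ^ ((2 : ℝ) / ((m : ℝ) - 1)) :=
  stmt_5_general x c m hm hx hsum
end

section
/- For any real x > 0 and any s with 0 < s < 1, x^{1-s} ≤ Γ(x+1)/Γ(x+s) ≤ (x+1)^{1-s}, where Γ denotes the Gamma function. -/
/-!
Both bounds come from the log-convexity of `Γ` on `(0, ∞)`, applied once on `[x, x + 1]` at the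
point `x + s` and once on `[x + s, x + s + 1]` at the point `x + 1`; the functional equation
`Γ(y + 1) = y Γ(y)` then turns the two convexity inequalities into
`x ^ (1 - s) Γ(x + s) ≤ Γ(x + 1) ≤ (x + s) ^ (1 - s) Γ(x + s)`.
-/

open Real

namespace Real

variable {x s : ℝ}

theorem rpow_one_sub_mul_Gamma_add_le_Gamma_add_one (hx : 0 < x) (hs0 : 0 < s) (hs1 : s < 1) :
    x ^ (1 - s) * Gamma (x + s) ≤ Gamma (x + 1) := by
  have hΓ : 0 < Gamma (x + 1) := Gamma_pos_of_pos (by linarith)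
  have hconv : Gamma (x + s) ≤ Gamma x ^ (1 - s) * Gamma (x + 1) ^ s := by
    have h := Gamma_mul_add_mul_le_rpow_Gamma_mul_rpow_Gamma hx (by linarith : 0 < x + 1)
      (by linarith : 0 < 1 - s) hs0 (by ring)
    rwa [show (1 - s) * x + s * (x + 1) = x + s by ring] at h
  calc x ^ (1 - s) * Gamma (x + s)
      ≤ x ^ (1 - s) * (Gamma x ^ (1 - s) * Gamma (x + 1) ^ s) := by gcongr
    _ = (x * Gamma x) ^ (1 - s) * Gamma (x + 1) ^ s := by
      rw [mul_rpow hx.le (Gamma_pos_of_pos hx).le, mul_assoc]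
    _ = Gamma (x + 1) := by
      rw [← Gamma_add_one hx.ne', ← rpow_add hΓ, sub_add_cancel, rpow_one]

theorem Gamma_add_one_le_rpow_one_sub_mul_Gamma_add (hx : 0 < x) (hs0 : 0 < s) (hs1 : s < 1) :
    Gamma (x + 1) ≤ (x + s) ^ (1 - s) * Gamma (x + s) := by
  have hxs : 0 < x + s := by linarith
  have hΓ : 0 < Gamma (x + s) := Gamma_pos_of_pos hxs
  have hconv : Gamma (x + 1) ≤ Gamma (x + s) ^ s * Gamma (x + s + 1) ^ (1 - s) := by
    have h := Gamma_mul_add_mul_le_rpow_Gamma_mul_rpow_Gamma hxs (by linarith : 0 < x + s + 1)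
      hs0 (by linarith : 0 < 1 - s) (by ring)
    rwa [show s * (x + s) + (1 - s) * (x + s + 1) = x + 1 by ring] at h
  calc Gamma (x + 1)
      ≤ Gamma (x + s) ^ s * ((x + s) * Gamma (x + s)) ^ (1 - s) := by
        rwa [← Gamma_add_one hxs.ne']
    _ = (x + s) ^ (1 - s) * Gamma (x + s) := by
      rw [mul_rpow hxs.le hΓ.le, mul_left_comm, ← rpow_add hΓ, add_sub_cancel, rpow_one]

end Real

theorem stmt_11 (x s : ℝ) (hx : 0 < x) (hs0 : 0 < s) (hs1 : s < 1) :
    x ^ (1 - s) ≤ Real.Gamma (x + 1) / Real.Gamma (x + s) ∧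
    Real.Gamma (x + 1) / Real.Gamma (x + s) ≤ (x + 1) ^ (1 - s) := by
  have hΓ : 0 < Gamma (x + s) := Gamma_pos_of_pos (by linarith)
  constructor
  · rw [le_div_iff₀ hΓ]
    exact rpow_one_sub_mul_Gamma_add_le_Gamma_add_one hx hs0 hs1
  · rw [div_le_iff₀ hΓ]
    calc Gamma (x + 1) ≤ (x + s) ^ (1 - s) * Gamma (x + s) :=
          Gamma_add_one_le_rpow_one_sub_mul_Gamma_add hx hs0 hs1
      _ ≤ (x + 1) ^ (1 - s) * Gamma (x + s) := by gcongr
end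

section
/- Let μ₁, …, μₘ be i.i.d. random variables distributed according to a distribution Γ on [0,1] satisfying P_Γ[μ > 1-ε] ≥ c₀ε for all ε ∈ (0,1]. Let θ = log(T)/(m·c₀) for T ≥ 1 with θ ≤ 1. Then P[max_{i=1}^m μᵢ < 1-θ] ≤ 1/T, and consequently T·(1 - E[max_{i=1}^m μᵢ]) ≤ 1 + T·θ = 1 + √T·log(T)/c₀ when m = ⌈√T⌉. -/
/-!
If `Γ` puts mass at least `c₀ θ` above `1 - θ`, each draw falls below `1 - θ` with probability at
most `1 - c₀ θ ≤ exp (-c₀ θ)`, so by independence all `m` draws do with probability at most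
`exp (-c₀ θ m) = 1 / T`. Since the maximum lies in `[0, 1]`, its shortfall from `1` is at most `1`
on that event and at most `θ` off it, whence `T (1 - E[max]) ≤ 1 + T θ`; with `m = ⌈√T⌉` the term
`T θ` is at most `√T log T / c₀`.
-/

open MeasureTheory ProbabilityTheory Set Real

theorem measure_Iio_le_exp_neg {Γ : Measure ℝ} [IsProbabilityMeasure Γ] {a p : ℝ}
    (h : p ≤ Γ.real (Ioi a)) : Γ (Iio a) ≤ ENNReal.ofReal (exp (-p)) := by
  rw [← ofReal_measureReal]
  refine ENNReal.ofReal_le_ofReal ?_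
  calc Γ.real (Iio a) ≤ Γ.real (Ioi a)ᶜ :=
        measureReal_mono (by rw [compl_Ioi]; exact Iio_subset_Iic_self)
    _ = 1 - Γ.real (Ioi a) := probReal_compl_eq_one_sub measurableSet_Ioi
    _ ≤ -p + 1 := by linarith
    _ ≤ exp (-p) := add_one_le_exp _

theorem measure_iSup_lt_le_pow {Ω ι : Type*} [MeasurableSpace Ω] {P : Measure Ω} [Fintype ι]
    {X : ι → Ω → ℝ} {Γ : Measure ℝ} (hindep : iIndepFun X P) (hmeas : ∀ i, Measurable (X i))
    (hlaw : ∀ i, P.map (X i) = Γ) (a : ℝ) :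
    P {ω | ⨆ i, X i ω < a} ≤ Γ (Iio a) ^ Fintype.card ι := by
  have hsub : {ω | ⨆ i, X i ω < a} ⊆ ⋂ i, X i ⁻¹' Iio a := fun ω hω ↦
    mem_iInter.2 fun i ↦ (le_ciSup (Finite.bddAbove (finite_range fun j ↦ X j ω)) i).trans_lt hω
  calc P {ω | ⨆ i, X i ω < a} ≤ P (⋂ i, X i ⁻¹' Iio a) := measure_mono hsub
    _ = ∏ i, P (X i ⁻¹' Iio a) := hindep.meas_iInter fun _ ↦ ⟨Iio a, measurableSet_Iio, rfl⟩
    _ = ∏ _i : ι, Γ (Iio a) := Finset.prod_congr rfl fun i _ ↦ by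
      rw [← hlaw i, Measure.map_apply (hmeas i) measurableSet_Iio]
    _ = Γ (Iio a) ^ Fintype.card ι := Finset.prod_const _

theorem ae_iSup_mem_Icc_of_map_eq {Ω ι : Type*} [MeasurableSpace Ω] [Countable ι]
    {P : Measure Ω} {X : ι → Ω → ℝ} {Γ : Measure ℝ} (hmeas : ∀ i, Measurable (X i))
    (hlaw : ∀ i, P.map (X i) = Γ) (hsupp : Γ (Icc 0 1)ᶜ = 0) :
    ∀ᵐ ω ∂P, ⨆ i, X i ω ∈ Icc 0 1 := by
  have hX01 : ∀ᵐ ω ∂P, ∀ i, X i ω ∈ Icc 0 1 := ae_all_iff.2 fun i ↦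
    ae_of_ae_map (hmeas i).aemeasurable (by rw [hlaw i]; exact mem_ae_iff.2 hsupp)
  filter_upwards [hX01] with ω hω
  exact ⟨iSup_nonneg fun i ↦ (hω i).1, Real.iSup_le (fun i ↦ (hω i).2) zero_le_one⟩

theorem one_sub_integral_le_measureReal_add {Ω : Type*} [MeasurableSpace Ω] {P : Measure Ω}
    [IsProbabilityMeasure P] {Y : Ω → ℝ} (hY : Measurable Y) (hY01 : ∀ᵐ ω ∂P, Y ω ∈ Icc 0 1)
    {θ : ℝ} (hθ : 0 ≤ θ) : 1 - ∫ ω, Y ω ∂P ≤ P.real {ω | Y ω < 1 - θ} + θ := by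
  set A := {ω | Y ω < 1 - θ}
  have hA : MeasurableSet A := hY measurableSet_Iio
  have hYint : Integrable Y P := by
    refine Integrable.mono' (integrable_const 1) hY.aestronglyMeasurable ?_
    filter_upwards [hY01] with ω hω
    rw [norm_eq_abs, abs_le]
    exact ⟨by linarith [hω.1], hω.2⟩
  have hAint : Integrable (A.indicator (1 : Ω → ℝ)) P := (integrable_const 1).indicator hA
  have hshortfall : (fun ω ↦ 1 - Y ω) ≤ᵐ[P] fun ω ↦ A.indicator 1 ω + θ := by
    filter_upwards [hY01] with ω hω
    by_cases hωA : ω ∈ A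
    · simp only [indicator_of_mem hωA, Pi.one_apply]; linarith [hω.1]
    · have hYω : ¬Y ω < 1 - θ := hωA
      simp only [indicator_of_notMem hωA]; linarith [not_lt.1 hYω]
  calc 1 - ∫ ω, Y ω ∂P = ∫ ω, (1 - Y ω) ∂P := by
        rw [integral_sub (integrable_const 1) hYint, integral_const]; simp
    _ ≤ ∫ ω, (A.indicator 1 ω + θ) ∂P :=
        integral_mono_ae ((integrable_const 1).sub hYint)
          (hAint.add (integrable_const θ)) hshortfall
    _ = P.real A + θ := by
        rw [integral_add hAint (integrable_const θ),
          integral_indicator_one hA, integral_const]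
        simp

theorem mul_div_natCeil_sqrt_mul_le {T L c : ℝ} (hT : 0 < T) (hL : 0 ≤ L) (hc : 0 < c) :
    T * (L / (⌈√T⌉₊ * c)) ≤ √T * L / c := by
  have hsqrt : 0 < √T := sqrt_pos.2 hT
  have hceil : √T ≤ ⌈√T⌉₊ := Nat.le_ceil _
  have hTm : T / ⌈√T⌉₊ ≤ √T := by
    rw [div_le_iff₀ (hsqrt.trans_le hceil)]
    calc T = √T * √T := (mul_self_sqrt hT.le).symm
      _ ≤ √T * ⌈√T⌉₊ := mul_le_mul_of_nonneg_left hceil hsqrt.le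
  calc T * (L / (⌈√T⌉₊ * c)) = T / ⌈√T⌉₊ * (L / c) := by ring
    _ ≤ √T * (L / c) := mul_le_mul_of_nonneg_right hTm (by positivity)
    _ = √T * L / c := by ring

theorem stmt_12 {Ω : Type*} [MeasurableSpace Ω] (P : Measure Ω) [IsProbabilityMeasure P]
    (Γ : Measure ℝ) [IsProbabilityMeasure Γ] (c₀ T θ : ℝ) (m : ℕ) (hm : 0 < m)
    (μs : Fin m → Ω → ℝ)
    (hmeas : ∀ i, Measurable (μs i))
    (hindep : iIndepFun μs P)
    (hlaw : ∀ i, Measure.map (μs i) P = Γ)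
    (hsupp : Γ (Set.Icc (0 : ℝ) 1)ᶜ = 0)
    (hc₀ : 0 < c₀)
    (hreg : ∀ ε : ℝ, 0 < ε → ε ≤ 1 → c₀ * ε ≤ (Γ {x | 1 - ε < x}).toReal)
    (hT : 1 ≤ T) (hθ : θ = Real.log T / (m * c₀)) (hθ1 : θ ≤ 1) :
    P {ω | (⨆ i, μs i ω) < 1 - θ} ≤ ENNReal.ofReal (1 / T)
    ∧ (m = ⌈Real.sqrt T⌉₊ →
        T * (1 - ∫ ω, (⨆ i, μs i ω) ∂P) ≤ 1 + Real.sqrt T * Real.log T / c₀) := by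
  have hT0 : 0 < T := one_pos.trans_le hT
  have hθ0 : 0 ≤ θ := by rw [hθ]; have := log_nonneg hT; positivity
  have htail : c₀ * θ ≤ Γ.real (Ioi (1 - θ)) := by
    rcases hθ0.eq_or_lt with h0 | hpos
    · simp [← h0]
    · exact hreg θ hpos hθ1
  have hexp : exp (-(c₀ * θ)) ^ m = 1 / T := by
    rw [← exp_nat_mul, hθ, show (m : ℝ) * -(c₀ * (log T / (m * c₀))) = -log T by field_simp,
      exp_neg, exp_log hT0, one_div]
  have hsmall : P {ω | ⨆ i, μs i ω < 1 - θ} ≤ ENNReal.ofReal (1 / T) := by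
    calc P {ω | ⨆ i, μs i ω < 1 - θ} ≤ Γ (Iio (1 - θ)) ^ m := by
          simpa using measure_iSup_lt_le_pow hindep hmeas hlaw (1 - θ)
      _ ≤ ENNReal.ofReal (exp (-(c₀ * θ))) ^ m := by gcongr; exact measure_Iio_le_exp_neg htail
      _ = ENNReal.ofReal (1 / T) := by rw [← ENNReal.ofReal_pow (exp_nonneg _), hexp]
  refine ⟨hsmall, fun hm_eq ↦ ?_⟩
  have hPA : P.real {ω | ⨆ i, μs i ω < 1 - θ} ≤ 1 / T :=
    ENNReal.toReal_le_of_le_ofReal (by positivity) hsmall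
  calc T * (1 - ∫ ω, ⨆ i, μs i ω ∂P) ≤ T * (1 / T + θ) := by
        gcongr
        exact (one_sub_integral_le_measureReal_add (Measurable.iSup hmeas)
          (ae_iSup_mem_Icc_of_map_eq hmeas hlaw hsupp) hθ0).trans (by linarith)
    _ = 1 + T * θ := by field_simp
    _ ≤ 1 + √T * log T / c₀ := by
        rw [hθ, hm_eq]
        gcongr
        exact mul_div_natCeil_sqrt_mul_le hT0 (log_nonneg hT) hc₀
end
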